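/- arXiv:1005.0725 — 6 statements merged into one kernel-verified Lean document; each statement's English description precedes it below -/
import Mathlib

section
/- For every (g,n)-admissible datum, one has n ≤ 2g + 2. In particular, for every g there are no (g,n)-admissible data when n > 2g + 2. (This is the combinatorial content of the paper's observation that the twisted part I_TW(M_{g,k}) of the inertia stack is empty whenever k > 2g + 2.) -/
/-!
Rewrite each Riemann–Hurwitz term as `dᵢ · (N − gcd(i, N))`. It is nonnegative, and when
`gcd(i, N) = 1` it is `dᵢ (N − 1) ≥ aᵢ (N − 1)`; since `aᵢ = 0` for the other `i`, the
ramification sum is at least `n (N − 1)`. Riemann–Hurwitz with `g' ≥ 0` then gives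
`2g − 2 ≥ −2N + n (N − 1)`, i.e. `(n − 2)(N − 1) ≤ 2g`, and `N − 1 ≥ 1`.
-/

/-- A `(g,n)`-admissible datum (Definition 2.2 of the paper): a tuple
`(g', N, d₁, …, d_{N−1}, a₁, …, a_{N−1})` of natural numbers with `N ≥ 2`,
where `d` and `a` are encoded as functions `ℕ → ℕ` vanishing outside `{1, …, N−1}`,
satisfying the Riemann–Hurwitz formula, the congruence `Σ i·dᵢ ≡ 0 (mod N)`,
`Σ aᵢ = n`, `aᵢ ≤ dᵢ`, and `aᵢ = 0` whenever `gcd(i, N) ≠ 1`. -/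
structure AdmissibleDatum (g n : ℕ) where
  g' : ℕ
  N : ℕ
  hN : 2 ≤ N
  d : ℕ → ℕ
  a : ℕ → ℕ
  hd : ∀ i : ℕ, i ∉ Finset.Ico 1 N → d i = 0
  ha : ∀ i : ℕ, i ∉ Finset.Ico 1 N → a i = 0
  hRH : (2 * (g : ℤ) - 2) = (N : ℤ) * (2 * (g' : ℤ) - 2) +
      ∑ i ∈ Finset.Ico 1 N,
        (d i : ℤ) * (Nat.gcd i N : ℤ) * (((N / Nat.gcd i N : ℕ) : ℤ) - 1)
  hmod : ((∑ i ∈ Finset.Ico 1 N, i * d i : ℕ) : ZMod N) = 0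
  hsum : ∑ i ∈ Finset.Ico 1 N, a i = n
  hle : ∀ i : ℕ, a i ≤ d i
  hcop : ∀ i : ℕ, Nat.gcd i N ≠ 1 → a i = 0

theorem Nat.gcd_mul_div_gcd_sub_one (i N : ℕ) :
    (Nat.gcd i N : ℤ) * (((N / Nat.gcd i N : ℕ) : ℤ) - 1) = N - Nat.gcd i N := by
  rw [mul_sub, mul_one, ← Nat.cast_mul, Nat.mul_div_cancel' (Nat.gcd_dvd_right i N)]

namespace AdmissibleDatum

variable {g n : ℕ} (A : AdmissibleDatum g n)

theorem a_mul_le_ramification_term (i : ℕ) :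
    (A.a i : ℤ) * (A.N - 1) ≤
      A.d i * Nat.gcd i A.N * (((A.N / Nat.gcd i A.N : ℕ) : ℤ) - 1) := by
  have hN : (1 : ℤ) ≤ A.N := by exact_mod_cast one_le_two.trans A.hN
  rw [mul_assoc, Nat.gcd_mul_div_gcd_sub_one]
  by_cases hcop : Nat.gcd i A.N = 1
  · rw [hcop, Nat.cast_one]
    exact mul_le_mul_of_nonneg_right (by exact_mod_cast A.hle i) (by linarith)
  · have hgcd : (Nat.gcd i A.N : ℤ) ≤ A.N := by
      exact_mod_cast Nat.gcd_le_right i (zero_lt_two.trans_le A.hN)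
    rw [A.hcop i hcop, Nat.cast_zero, zero_mul]
    exact mul_nonneg (Nat.cast_nonneg _) (by linarith)

theorem n_mul_le_ramification_sum :
    (n : ℤ) * (A.N - 1) ≤ ∑ i ∈ Finset.Ico 1 A.N,
      (A.d i : ℤ) * Nat.gcd i A.N * (((A.N / Nat.gcd i A.N : ℕ) : ℤ) - 1) := by
  calc (n : ℤ) * (A.N - 1) = ∑ i ∈ Finset.Ico 1 A.N, (A.a i : ℤ) * (A.N - 1) := by
        rw [← Finset.sum_mul, ← Nat.cast_sum, A.hsum]
    _ ≤ _ := Finset.sum_le_sum fun i _ => A.a_mul_le_ramification_term i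

theorem sub_two_mul_le : ((n : ℤ) - 2) * (A.N - 1) ≤ 2 * g := by
  have hg' : (0 : ℤ) ≤ A.g' := Nat.cast_nonneg _
  have hN : (0 : ℤ) ≤ A.N := Nat.cast_nonneg _
  nlinarith [A.hRH, A.n_mul_le_ramification_sum]

end AdmissibleDatum

/-- For every `(g,n)`-admissible datum one has `n ≤ 2g + 2`; in particular there are no
`(g,n)`-admissible data when `n > 2g + 2`. -/
theorem admissibleDatum_n_le (g n : ℕ) (A : AdmissibleDatum g n) : n ≤ 2 * g + 2 := by
  have hN : (2 : ℤ) ≤ A.N := by exact_mod_cast A.hN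
  have key := A.sub_two_mul_le
  by_contra! hn
  have hn' : (0 : ℤ) < n - 2 := by omega
  nlinarith
end

section
/- Every (2,n)-admissible datum with g' = 1 has N = 2, d_1 = 2 (and d_i = 0 for all i ≥ 2); consequently a_1 = n and n ≤ 2. (This is the claim, used in the proofs of Propositions 2.11 and 2.12, that in genus 2 the only coverings of genus 1 curves are the double coverings branched at two points, i.e. the twisted sectors II, II_1, II_11.) -/
open Finset

theorem Nat.two_mul_le_of_dvd_of_lt {d N : ℕ} (hdvd : d ∣ N) (hlt : d < N) : 2 * d ≤ N := by
  obtain ⟨k, rfl⟩ := hdvd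
  rcases k with _ | _ | k
  · omega
  · omega
  · nlinarith

theorem Nat.two_mul_gcd_le {i N : ℕ} (hi : 0 < i) (hiN : i < N) : 2 * Nat.gcd i N ≤ N :=
  Nat.two_mul_le_of_dvd_of_lt (Nat.gcd_dvd_right i N) ((Nat.gcd_le_left N hi).trans_lt hiN)

/-- The ramification term `Σ dᵢ gcd(i, N) (N / gcd(i, N) - 1)` of the Riemann–Hurwitz formula. -/
def ramificationSum (N : ℕ) (d : ℕ → ℕ) : ℕ :=
  ∑ i ∈ Ico 1 N, d i * (N - Nat.gcd i N)

theorem le_two_mul_ramificationSum {N : ℕ} {d : ℕ → ℕ} (hS : ramificationSum N d ≠ 0) :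
    N ≤ 2 * ramificationSum N d := by
  obtain ⟨i, hi, hterm⟩ := exists_ne_zero_of_sum_ne_zero hS
  obtain ⟨hi1, hiN⟩ := mem_Ico.mp hi
  have hgcd := Nat.two_mul_gcd_le hi1 hiN
  have hdi : 0 < d i := Nat.pos_of_ne_zero (left_ne_zero_of_mul hterm)
  have hle : d i * (N - Nat.gcd i N) ≤ ramificationSum N d :=
    single_le_sum (f := fun j => d j * (N - Nat.gcd j N)) (fun _ _ => Nat.zero_le _) hi
  calc N ≤ 2 * (N - Nat.gcd i N) := by omega
    _ ≤ 2 * (d i * (N - Nat.gcd i N)) := by gcongr; exact Nat.le_mul_of_pos_left _ hdi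
    _ ≤ 2 * ramificationSum N d := by gcongr

theorem eq_two_of_ramificationSum_eq_two {N : ℕ} {d : ℕ → ℕ} (hN : 2 ≤ N)
    (hS : ramificationSum N d = 2) (hdvd : N ∣ ∑ i ∈ Ico 1 N, i * d i) : N = 2 ∧ d 1 = 2 := by
  have hN4 : N ≤ 4 := by
    have := le_two_mul_ramificationSum (N := N) (d := d) (by omega)
    rwa [hS] at this
  unfold ramificationSum at hS
  interval_cases N
  · simpa [Nat.Ico_succ_singleton] using hS
  · simp [sum_Ico_succ_top] at hS hdvd
    omega
  · simp [sum_Ico_succ_top] at hS hdvd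
    omega

namespace AdmissibleDatum

variable {g n : ℕ} (A : AdmissibleDatum g n)

theorem ramificationSum_eq :
    (ramificationSum A.N A.d : ℤ) = 2 * g - 2 - A.N * (2 * A.g' - 2) := by
  have hterm : ∀ i ∈ Ico 1 A.N, (A.d i : ℤ) * (Nat.gcd i A.N : ℤ) *
      (((A.N / Nat.gcd i A.N : ℕ) : ℤ) - 1) = ((A.d i * (A.N - Nat.gcd i A.N) : ℕ) : ℤ) := by
    intro i hi
    have hgcd : Nat.gcd i A.N ≤ A.N := Nat.gcd_le_right _ (zero_lt_two.trans_le A.hN)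
    have hmul : (Nat.gcd i A.N : ℤ) * ((A.N / Nat.gcd i A.N : ℕ) : ℤ) = A.N := by
      exact_mod_cast Nat.mul_div_cancel' (Nat.gcd_dvd_right i A.N)
    generalize A.N / Nat.gcd i A.N = q at hmul ⊢
    push_cast [hgcd]
    linear_combination (A.d i : ℤ) * hmul
  rw [ramificationSum, Nat.cast_sum, ← sum_congr rfl hterm, A.hRH]
  ring

theorem N_dvd_sum_mul : A.N ∣ ∑ i ∈ Ico 1 A.N, i * A.d i :=
  (ZMod.natCast_eq_zero_iff _ _).mp A.hmod

end AdmissibleDatum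

/-- Every `(2,n)`-admissible datum with `g' = 1` has `N = 2`, `d 1 = 2` (and `d i = 0` for
all `i ≥ 2`); consequently `a 1 = n` and `n ≤ 2`. -/
theorem admissibleDatum_genus_two_g'_eq_one (n : ℕ) (A : AdmissibleDatum 2 n)
    (h : A.g' = 1) :
    A.N = 2 ∧ A.d 1 = 2 ∧ (∀ i : ℕ, 2 ≤ i → A.d i = 0) ∧ A.a 1 = n ∧ n ≤ 2 := by
  have hS : ramificationSum A.N A.d = 2 := by
    have := A.ramificationSum_eq
    rw [h] at this
    omega
  obtain ⟨hN, hd1⟩ := eq_two_of_ramificationSum_eq_two A.hN hS A.N_dvd_sum_mul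
  have ha1 : A.a 1 = n := by simpa [hN] using A.hsum
  refine ⟨hN, hd1, fun i hi => A.hd i (by rw [hN, mem_Ico]; omega), ha1, ?_⟩
  simpa [ha1, hd1] using A.hle 1
end

section
/- Every (2,0)-admissible datum with g' = 0 satisfies the connectedness condition gcd(N, {i : d_i ≠ 0}) = 1; that is, the greatest common divisor of N together with all indices i ∈ {1, …, N−1} for which d_i ≠ 0 equals 1. (This is the numerical condition, verified in the proof of Proposition 2.12, equivalent to connectedness of the corresponding cyclic covering of a genus 0 curve; the paper asserts: 'This condition happens to be satisfied by all (2,0)-admissible data.') -/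
theorem Int.natCast_sub_gcd_modEq_two (M j : ℕ) :
    (M : ℤ) - Nat.gcd j M ≡ (M + 1) * j [ZMOD 2] := by
  refine (ZMod.intCast_eq_intCast_iff _ _ 2).mp ?_
  push_cast
  rcases Nat.even_or_odd M with hM | hM
  · have hgcd : (Nat.gcd j M : ZMod 2) = j := by
      have : 2 ∣ Nat.gcd j M ↔ 2 ∣ j :=
        ⟨fun h => h.trans (Nat.gcd_dvd_left j M), fun h => Nat.dvd_gcd h hM.two_dvd⟩
      rw [ZMod.natCast_eq_natCast_iff']
      omega
    rw [hgcd, ZMod.natCast_eq_zero_iff_even.mpr hM, zero_sub, zero_add, one_mul,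
      ZMod.neg_eq_self_mod_two]
  · rw [ZMod.natCast_eq_one_iff_odd.mpr hM,
      ZMod.natCast_eq_one_iff_odd.mpr (hM.of_dvd_nat (Nat.gcd_dvd_right j M))]
    simp [show (1 + 1 : ZMod 2) = 0 from rfl]

theorem Int.two_mul_sub_gcd_two_mul_modEq_four (M j : ℕ) :
    ((2 * M : ℕ) : ℤ) - Nat.gcd (2 * j) (2 * M) ≡ (M + 1) * (2 * j : ℕ) [ZMOD 4] := by
  have := (Int.natCast_sub_gcd_modEq_two M j).mul_left' (c := 2)
  rw [Nat.gcd_mul_left]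
  push_cast
  convert this using 1 <;> ring

namespace AdmissibleDatum

variable {g n : ℕ} (A : AdmissibleDatum g n)

theorem dvd_sum_mul_d : A.N ∣ ∑ i ∈ Finset.Ico 1 A.N, i * A.d i :=
  (ZMod.natCast_eq_zero_iff _ _).mp A.hmod

theorem two_mul_genus_sub_two_eq :
    2 * (g : ℤ) - 2 = A.N * (2 * A.g' - 2) +
      ∑ i ∈ Finset.Ico 1 A.N, (A.d i : ℤ) * (A.N - Nat.gcd i A.N) := by
  rw [A.hRH]
  congr 1
  refine Finset.sum_congr rfl fun i _ => ?_
  have hdiv : ((A.N / Nat.gcd i A.N : ℕ) : ℤ) * Nat.gcd i A.N = A.N := by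
    exact_mod_cast Nat.div_mul_cancel (Nat.gcd_dvd_right i A.N)
  linear_combination (A.d i : ℤ) * hdiv

theorem dvd_two_mul_genus_sub_two {m : ℕ} (hmN : m ∣ A.N) (hm : ∀ i, A.d i ≠ 0 → m ∣ i) :
    (m : ℤ) ∣ 2 * g - 2 := by
  rw [two_mul_genus_sub_two_eq]
  have hmN' : (m : ℤ) ∣ A.N := Int.natCast_dvd_natCast.mpr hmN
  refine dvd_add (hmN'.mul_right _) (Finset.dvd_sum fun i _ => ?_)
  by_cases hi : A.d i = 0
  · simp [hi]
  · have hmgcd : (m : ℤ) ∣ Nat.gcd i A.N :=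
      Int.natCast_dvd_natCast.mpr (Nat.dvd_gcd (hm i hi) hmN)
    exact (dvd_sub hmN' hmgcd).mul_left _

theorem four_dvd_two_mul_genus_sub_two (h2N : 2 ∣ A.N) (h2 : ∀ i, A.d i ≠ 0 → 2 ∣ i) :
    (4 : ℤ) ∣ 2 * g - 2 := by
  obtain ⟨M, hM⟩ := h2N
  obtain ⟨k, hk⟩ := A.dvd_sum_mul_d
  have hterm : ∀ i ∈ Finset.Ico 1 A.N,
      (A.d i : ℤ) * (A.N - Nat.gcd i A.N) ≡ (M + 1) * (i * A.d i : ℕ) [ZMOD 4] := by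
    intro i _
    by_cases hi : A.d i = 0
    · simp [hi]
    obtain ⟨j, rfl⟩ := h2 i hi
    rw [hM]
    convert (Int.two_mul_sub_gcd_two_mul_modEq_four M j).mul_left (A.d (2 * j)) using 1
    push_cast
    ring
  have hsum : ∑ i ∈ Finset.Ico 1 A.N, (A.d i : ℤ) * (A.N - Nat.gcd i A.N) ≡ 0 [ZMOD 4] := by
    refine (Int.ModEq.sum hterm).trans ?_
    obtain ⟨r, hr⟩ := Int.even_mul_succ_self M
    rw [← Finset.mul_sum, ← Nat.cast_sum, hk, hM]
    push_cast
    exact Int.modEq_zero_iff_dvd.mpr ⟨r * k, by linear_combination (2 * k) * hr⟩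
  have hconst : (4 : ℤ) ∣ A.N * (2 * A.g' - 2) :=
    ⟨M * (A.g' - 1), by rw [hM]; push_cast; ring⟩
  rw [two_mul_genus_sub_two_eq]
  exact dvd_add hconst (Int.modEq_zero_iff_dvd.mp hsum)

end AdmissibleDatum

theorem admissibleDatum_two_zero_connected_general (A : AdmissibleDatum 2 0) :
    Nat.gcd A.N (((Finset.Ico 1 A.N).filter (fun i => A.d i ≠ 0)).gcd id) = 1 := by
  set m := Nat.gcd A.N (((Finset.Ico 1 A.N).filter (fun i => A.d i ≠ 0)).gcd id)
  have hmN : m ∣ A.N := Nat.gcd_dvd_left _ _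
  have hm : ∀ i, A.d i ≠ 0 → m ∣ i := fun i hi =>
    (Nat.gcd_dvd_right _ _).trans <| Finset.gcd_dvd <| Finset.mem_filter.mpr
      ⟨not_imp_comm.mp (A.hd i) hi, hi⟩
  have hm2 : m ∣ 2 := by
    have := A.dvd_two_mul_genus_sub_two hmN hm
    norm_num at this
    exact_mod_cast this
  rcases (Nat.dvd_prime Nat.prime_two).mp hm2 with h1 | h2
  · exact h1
  · rw [h2] at hmN hm
    have := A.four_dvd_two_mul_genus_sub_two hmN hm
    norm_num at this

/-- Every `(2,0)`-admissible datum with `g' = 0` satisfies the connectedness condition: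
the greatest common divisor of `N` together with all indices `i` in `{1, ..., N-1}` for
which `d i ≠ 0` equals `1`. -/
theorem admissibleDatum_two_zero_connected (A : AdmissibleDatum 2 0) (h : A.g' = 0) :
    Nat.gcd A.N (((Finset.Ico 1 A.N).filter (fun i => A.d i ≠ 0)).gcd id) = 1 :=
  admissibleDatum_two_zero_connected_general A
end

section
/- The number of pairs (A, α), where A is a (2,2)-admissible datum and α is an assignment for A, equals twenty-six. (By Proposition 2.12 of the paper, such pairs correspond bijectively to the twisted sectors of the inertia stack I(M_{2,2}); the paper records this count as 'twenty-six data with n = 2'.) -/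
/-- A pair `(A, α)` of a `(g,n)`-admissible datum `A` and an assignment `α` for `A`:
a function `α : {1, ..., n} → {1, ..., N-1}` such that `gcd(α j, N) = 1` for every `j`
and the fiber of `α` over `i` has exactly `a i` elements, for every `i`. -/
structure AssignedDatum (g n : ℕ) where
  A : AdmissibleDatum g n
  α : Fin n → ℕ
  hmem : ∀ j : Fin n, α j ∈ Finset.Ico 1 A.N
  hαcop : ∀ j : Fin n, Nat.gcd (α j) A.N = 1
  hfiber : ∀ i : ℕ, (Finset.univ.filter (fun j : Fin n => α j = i)).card = A.a i

/-! Subtracting the contribution of the marked points from the Riemann–Hurwitz formula leaves,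
for `(g, n) = (2, 2)`, the identity `∑ᵢ (dᵢ - aᵢ) (N - gcd(i, N)) + 2 N g' = 4`. Every weight
`N - gcd(i, N)` with `0 < i < N` is at least `N / 2`, so `g' ≤ 1`, `N ≤ 8` and each excess
`dᵢ - aᵢ` is at most `4 / (N - gcd(i, N))`. A pair `(A, α)` is determined by `N`, `g'`, these
excesses and `α`, which range over a finite type on which the remaining conditions are decidable;
the `26` valid codes are then counted by `decide`. -/

open Finset

theorem Nat.le_two_mul_sub_gcd {i N : ℕ} (hi : 0 < i) (hiN : i < N) :
    N ≤ 2 * (N - Nat.gcd i N) := by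
  obtain ⟨k, hk⟩ := Nat.gcd_dvd_right i N
  have hle : Nat.gcd i N ≤ i := Nat.gcd_le_left N hi
  have hk : 2 ≤ k := by
    rcases k with _ | _ | k <;> omega
  have := Nat.mul_le_mul_left (Nat.gcd i N) hk
  omega

theorem sum_mul_gcd_mul_div_gcd_sub_one (N : ℕ) (d : ℕ → ℕ) :
    ∑ i ∈ Ico 1 N, (d i : ℤ) * (Nat.gcd i N : ℤ) * (((N / Nat.gcd i N : ℕ) : ℤ) - 1) =
      ((∑ i ∈ Ico 1 N, d i * (N - Nat.gcd i N) : ℕ) : ℤ) := by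
  rw [Nat.cast_sum]
  refine sum_congr rfl fun i hi => ?_
  have hdvd := Nat.gcd_dvd_right i N
  have hcancel : ((Nat.gcd i N * (N / Nat.gcd i N) : ℕ) : ℤ) = N := by
    rw [Nat.mul_div_cancel' hdvd]
  push_cast [Nat.cast_sub (Nat.le_of_dvd (by grind) hdvd)] at hcancel ⊢
  linear_combination (d i : ℤ) * hcancel

section RiemannHurwitz

variable {g g' n N : ℕ} {d a : ℕ → ℕ}

theorem sum_mul_sub_gcd_eq_add (hle : ∀ i, a i ≤ d i) (hcop : ∀ i, Nat.gcd i N ≠ 1 → a i = 0)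
    (hsum : ∑ i ∈ Ico 1 N, a i = n) :
    ∑ i ∈ Ico 1 N, d i * (N - Nat.gcd i N) =
      n * (N - 1) + ∑ i ∈ Ico 1 N, (d i - a i) * (N - Nat.gcd i N) := by
  have hmarked : ∀ i, a i * (N - Nat.gcd i N) = a i * (N - 1) := fun i => by
    by_cases h : Nat.gcd i N = 1
    · rw [h]
    · rw [hcop i h, zero_mul, zero_mul]
  rw [← hsum, sum_mul, ← sum_add_distrib]
  refine sum_congr rfl fun i _ => ?_
  rw [← hmarked, ← add_mul, Nat.add_sub_cancel' (hle i)]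

theorem riemannHurwitz_iff (hle : ∀ i, a i ≤ d i) (hcop : ∀ i, Nat.gcd i N ≠ 1 → a i = 0)
    (hsum : ∑ i ∈ Ico 1 N, a i = n) :
    (2 * (g : ℤ) - 2 = (N : ℤ) * (2 * (g' : ℤ) - 2) +
      ∑ i ∈ Ico 1 N, (d i : ℤ) * (Nat.gcd i N : ℤ) * (((N / Nat.gcd i N : ℕ) : ℤ) - 1)) ↔
      2 * g + 2 * N = 2 + 2 * N * g' + n * (N - 1) +
        ∑ i ∈ Ico 1 N, (d i - a i) * (N - Nat.gcd i N) := by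
  rw [sum_mul_gcd_mul_div_gcd_sub_one, sum_mul_sub_gcd_eq_add hle hcop hsum]
  generalize ∑ i ∈ Ico 1 N, (d i - a i) * (N - Nat.gcd i N) = S
  rcases Nat.eq_zero_or_pos N with rfl | hN
  · simp only [CharP.cast_eq_zero, zero_mul, zero_add, Nat.zero_sub, mul_zero]
    omega
  · rw [← Nat.cast_inj (R := ℤ)]
    push_cast [Nat.one_le_of_lt hN]
    constructor <;> intro h <;> linear_combination h

end RiemannHurwitz

section ExcessEqFour

variable {N g' : ℕ} {e : ℕ → ℕ}

theorem genus_le_one_of_excess_eq_four (hN : 2 ≤ N)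
    (he : ∑ i ∈ Ico 1 N, e i * (N - Nat.gcd i N) + 2 * N * g' = 4) : g' ≤ 1 := by
  by_contra! hg'
  have := Nat.mul_le_mul hN hg'
  rw [mul_assoc] at he
  omega

theorem le_eight_of_excess_eq_four
    (he : ∑ i ∈ Ico 1 N, e i * (N - Nat.gcd i N) + 2 * N * g' = 4) : N ≤ 8 := by
  rcases Nat.eq_zero_or_pos g' with rfl | hg'
  · obtain ⟨i, hi, hei⟩ : ∃ i ∈ Ico 1 N, e i * (N - Nat.gcd i N) ≠ 0 :=
      exists_ne_zero_of_sum_ne_zero (by omega)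
    have hle : e i * (N - Nat.gcd i N) ≤ 4 := by
      have := single_le_sum (f := fun i => e i * (N - Nat.gcd i N)) (by simp) hi
      omega
    have := Nat.le_two_mul_sub_gcd (mem_Ico.1 hi).1 (mem_Ico.1 hi).2
    have := Nat.le_mul_of_pos_left (N - Nat.gcd i N)
      (Nat.pos_of_ne_zero (left_ne_zero_of_mul hei))
    omega
  · have := Nat.le_mul_of_pos_right N hg'
    rw [mul_assoc] at he
    omega

theorem excess_le_of_excess_eq_four
    (he : ∑ i ∈ Ico 1 N, e i * (N - Nat.gcd i N) + 2 * N * g' = 4) {i : ℕ} (hi : i ∈ Ico 1 N) :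
    e i ≤ 4 / (N - Nat.gcd i N) := by
  have := Nat.gcd_le_left N (mem_Ico.1 hi).1
  rw [Nat.le_div_iff_mul_le (by grind)]
  have := single_le_sum (f := fun i => e i * (N - Nat.gcd i N)) (by simp) hi
  omega

end ExcessEqFour

def excessBound (N i : ℕ) : ℕ := if i ∈ Ico 1 N then 4 / (N - Nat.gcd i N) + 1 else 1

/-- A pair `(A, α)` is encoded by `N`, `g'`, the excesses `dᵢ - aᵢ` for `i < 8` and `α`; the
ranges are those allowed by `N ≤ 8`, `g' ≤ 1` and `excessBound`. -/
abbrev DatumCode : Type :=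
  Σ N : Fin 9, Fin 2 × ((i : Fin 8) → Fin (excessBound N i)) × (Fin 2 → Fin 8)

namespace DatumCode

variable (p : DatumCode)

def N : ℕ := p.1

def genus : ℕ := p.2.1

def α (j : Fin 2) : ℕ := p.2.2.2 j

def a (i : ℕ) : ℕ := #{j | p.α j = i}

def excess (i : ℕ) : ℕ := if h : i < 8 then p.2.2.1 ⟨i, h⟩ else 0

def d (i : ℕ) : ℕ := p.a i + p.excess i

def IsValid : Prop :=
  2 ≤ p.N ∧ (∀ j, p.α j ∈ Ico 1 p.N ∧ Nat.gcd (p.α j) p.N = 1) ∧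
    ∑ i ∈ Ico 1 p.N, p.excess i * (p.N - Nat.gcd i p.N) + 2 * p.N * p.genus = 4 ∧
    p.N ∣ ∑ i ∈ Ico 1 p.N, i * p.d i

instance : DecidablePred IsValid := fun p => by unfold IsValid; infer_instance

variable {p}

theorem excess_eq_zero {i : ℕ} (hi : i ∉ Ico 1 p.N) : p.excess i = 0 := by
  unfold excess
  split_ifs with h
  · replace hi : i ∉ Ico 1 (p.1 : ℕ) := hi
    simpa [excessBound, hi] using (p.2.2.1 ⟨i, h⟩).2
  · rfl

theorem a_eq_zero (hp : p.IsValid) {i : ℕ} (hi : i ∉ Ico 1 p.N) : p.a i = 0 := by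
  refine card_eq_zero.2 (filter_eq_empty_iff.2 fun j _ hj => hi ?_)
  exact hj ▸ (hp.2.1 j).1

theorem sum_a_eq_two (hp : p.IsValid) : ∑ i ∈ Ico 1 p.N, p.a i = 2 :=
  (card_eq_sum_card_fiberwise fun j _ => (hp.2.1 j).1).symm

theorem a_le_d (i : ℕ) : p.a i ≤ p.d i := Nat.le_add_right _ _

theorem a_eq_zero_of_gcd_ne_one (hp : p.IsValid) {i : ℕ} (hi : Nat.gcd i p.N ≠ 1) : p.a i = 0 :=
  card_eq_zero.2 (filter_eq_empty_iff.2 fun j _ hj => hi (hj ▸ (hp.2.1 j).2))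

theorem riemannHurwitz (hp : p.IsValid) :
    2 * ((2 : ℕ) : ℤ) - 2 = (p.N : ℤ) * (2 * (p.genus : ℤ) - 2) +
      ∑ i ∈ Ico 1 p.N,
        (p.d i : ℤ) * (Nat.gcd i p.N : ℤ) * (((p.N / Nat.gcd i p.N : ℕ) : ℤ) - 1) := by
  rw [riemannHurwitz_iff a_le_d (fun _ => a_eq_zero_of_gcd_ne_one hp) (sum_a_eq_two hp)]
  simp only [d, Nat.add_sub_cancel_left]
  have := hp.1
  have := hp.2.2.1
  omega

def toAssignedDatum (hp : p.IsValid) : AssignedDatum 2 2 where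
  A :=
    { g' := p.genus
      N := p.N
      hN := hp.1
      d := p.d
      a := p.a
      hd := fun i hi => by rw [d, a_eq_zero hp hi, excess_eq_zero hi]
      ha := fun _ => a_eq_zero hp
      hRH := riemannHurwitz hp
      hmod := (ZMod.natCast_eq_zero_iff _ _).2 hp.2.2.2
      hsum := sum_a_eq_two hp
      hle := a_le_d
      hcop := fun _ => a_eq_zero_of_gcd_ne_one hp }
  α := p.α
  hmem j := (hp.2.1 j).1
  hαcop j := (hp.2.1 j).2
  hfiber _ := rfl

end DatumCode

theorem AdmissibleDatum.excess_sum_eq_four (A : AdmissibleDatum 2 2) :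
    ∑ i ∈ Ico 1 A.N, (A.d i - A.a i) * (A.N - Nat.gcd i A.N) + 2 * A.N * A.g' = 4 := by
  have := (riemannHurwitz_iff A.hle A.hcop A.hsum).1 A.hRH
  have := A.hN
  omega

theorem AdmissibleDatum.excess_lt_excessBound (A : AdmissibleDatum 2 2) (i : ℕ) :
    A.d i - A.a i < excessBound A.N i := by
  unfold excessBound
  split_ifs with hi
  · exact Nat.lt_succ_of_le (excess_le_of_excess_eq_four A.excess_sum_eq_four hi)
  · simp [A.hd i hi]

namespace AssignedDatum

variable (X : AssignedDatum 2 2)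

def toDatumCode : DatumCode :=
  ⟨⟨X.A.N, Nat.lt_succ_of_le (le_eight_of_excess_eq_four X.A.excess_sum_eq_four)⟩,
    ⟨X.A.g', Nat.lt_succ_of_le (genus_le_one_of_excess_eq_four X.A.hN X.A.excess_sum_eq_four)⟩,
    fun i => ⟨X.A.d i - X.A.a i, X.A.excess_lt_excessBound i⟩,
    fun j => ⟨X.α j, (mem_Ico.1 (X.hmem j)).2.trans_le
      (le_eight_of_excess_eq_four X.A.excess_sum_eq_four)⟩⟩

theorem toDatumCode_a : X.toDatumCode.a = X.A.a := funext X.hfiber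

theorem toDatumCode_excess (i : ℕ) : X.toDatumCode.excess i = X.A.d i - X.A.a i := by
  unfold DatumCode.excess
  split_ifs with hi
  · rfl
  · have hi : i ∉ Ico 1 X.A.N := fun h =>
      hi ((mem_Ico.1 h).2.trans_le (le_eight_of_excess_eq_four X.A.excess_sum_eq_four))
    rw [X.A.hd i hi, Nat.zero_sub]

theorem toDatumCode_d : X.toDatumCode.d = X.A.d := by
  funext i
  rw [DatumCode.d, toDatumCode_a, toDatumCode_excess, Nat.add_sub_cancel' (X.A.hle i)]

theorem isValid_toDatumCode : X.toDatumCode.IsValid := by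
  refine ⟨X.A.hN, fun j => ⟨X.hmem j, X.hαcop j⟩, ?_, ?_⟩
  · simp only [toDatumCode_excess]
    exact X.A.excess_sum_eq_four
  · rw [toDatumCode_d, ← ZMod.natCast_eq_zero_iff]
    exact X.A.hmod

end AssignedDatum

attribute [ext] AdmissibleDatum AssignedDatum

theorem DatumCode.toDatumCode_toAssignedDatum {p : DatumCode} (hp : p.IsValid) :
    (p.toAssignedDatum hp).toDatumCode = p := by
  obtain ⟨N, g', e, α⟩ := p
  refine Sigma.ext rfl (heq_of_eq (Prod.ext rfl (Prod.ext ?_ rfl)))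
  funext i
  ext
  simp [AssignedDatum.toDatumCode, toAssignedDatum, d, excess]

theorem AssignedDatum.toAssignedDatum_toDatumCode (X : AssignedDatum 2 2) :
    X.toDatumCode.toAssignedDatum X.isValid_toDatumCode = X := by
  ext
  · rfl
  · rfl
  · exact congrFun X.toDatumCode_d _
  · exact congrFun X.toDatumCode_a _
  · rfl

def assignedDatumEquivDatumCode : AssignedDatum 2 2 ≃ {p : DatumCode // p.IsValid} where
  toFun X := ⟨X.toDatumCode, X.isValid_toDatumCode⟩
  invFun p := p.1.toAssignedDatum p.2
  left_inv := AssignedDatum.toAssignedDatum_toDatumCode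
  right_inv p := Subtype.ext (DatumCode.toDatumCode_toAssignedDatum p.2)

set_option maxRecDepth 40000 in
theorem DatumCode.card_isValid : Fintype.card {p : DatumCode // p.IsValid} = 26 := by
  decide

/-- The number of pairs `(A, α)`, where `A` is a `(2,2)`-admissible datum and `α` is an
assignment for `A`, equals twenty-six. -/
theorem card_assignedDatum_two_two : Nat.card (AssignedDatum 2 2) = 26 := by
  rw [Nat.card_congr assignedDatumEquivDatumCode, Nat.card_eq_fintype_card]
  exact DatumCode.card_isValid
end

section
/- The number of pairs (A, α), where A is a (2,4)-admissible datum and α is an assignment for A, equals seven. (By Proposition 2.12 of the paper, such pairs correspond bijectively to the twisted sectors of the inertia stack I(M_{2,4}); the paper records this count as 'seven data with n = 4'.) -/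
open Finset

section FiberCard

variable {ι : Type*} [Fintype ι]

theorem ne_zero_of_card_fiber_eq {α : ι → ℕ} {a : ℕ → ℕ}
    (hα : ∀ i, #{j | α j = i} = a i) (j : ι) : a (α j) ≠ 0 := by
  rw [← hα, ← pos_iff_ne_zero, card_pos]
  exact ⟨j, mem_filter.2 ⟨mem_univ j, rfl⟩⟩

variable [DecidableEq ι] {a : ℕ → ℕ} {k l : ℕ}

theorem card_fiber_ite (hkl : k ≠ l) (ha : ∀ i, i ≠ k → i ≠ l → a i = 0)
    (hcard : a k + a l = Fintype.card ι) (s : Finset ι) (hs : #s = a l) (i : ℕ) :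
    #{j | (if j ∈ s then l else k) = i} = a i := by
  by_cases hil : i = l
  · subst hil
    simp [hkl, hs]
  by_cases hik : i = k
  · subst hik
    have : ({j | (if j ∈ s then l else i) = i} : Finset ι) = sᶜ := by
      ext j; by_cases hj : j ∈ s <;> simp [hj, Ne.symm hkl]
    rw [this, card_compl, hs]
    omega
  · rw [ha i hik hil, card_eq_zero, filter_eq_empty_iff]
    intro j _
    split_ifs <;> omega

def fiberCardEquivFinset (hkl : k ≠ l) (ha : ∀ i, i ≠ k → i ≠ l → a i = 0)
    (hcard : a k + a l = Fintype.card ι) :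
    {α : ι → ℕ // ∀ i, #{j | α j = i} = a i} ≃ {s : Finset ι // #s = a l} where
  toFun α := ⟨({j | α.1 j = l} : Finset ι), α.2 l⟩
  invFun s := ⟨fun j => if j ∈ s.1 then l else k, card_fiber_ite hkl ha hcard s.1 s.2⟩
  left_inv := by
    rintro ⟨α, hα⟩
    ext j
    have := ne_zero_of_card_fiber_eq hα j
    by_cases h : α j = l
    · simp [h]
    · simp only [mem_filter, mem_univ, true_and, if_neg h]
      by_contra h'
      exact this (ha _ (Ne.symm h') h)
  right_inv s := by
    ext j
    by_cases h : j ∈ s.1 <;> simp [h, hkl]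

end FiberCard

attribute [ext] AdmissibleDatum

namespace AdmissibleDatum

section

variable {g n : ℕ} (A : AdmissibleDatum g n)

theorem a_mul_le_ramification (i : ℕ) :
    (A.a i : ℤ) * (A.N - 1) ≤
      (A.d i : ℤ) * (Nat.gcd i A.N : ℤ) * (((A.N / Nat.gcd i A.N : ℕ) : ℤ) - 1) := by
  have hN := A.hN
  by_cases hcop : Nat.gcd i A.N = 1
  · rw [hcop, Nat.div_one, Nat.cast_one, mul_one]
    gcongr
    · omega
    · exact A.hle i
  · have hquot : 1 ≤ A.N / Nat.gcd i A.N :=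
      Nat.div_pos (Nat.gcd_le_right _ (by omega)) (Nat.gcd_pos_of_pos_right _ (by omega))
    rw [A.hcop i hcop, Nat.cast_zero, zero_mul]
    have : (1 : ℤ) ≤ (A.N / Nat.gcd i A.N : ℕ) := by exact_mod_cast hquot
    have : (0 : ℤ) ≤ (A.N / Nat.gcd i A.N : ℕ) - 1 := by omega
    positivity

theorem riemannHurwitz_lower_bound :
    (A.N : ℤ) * (2 * A.g' - 2) + n * (A.N - 1) ≤ 2 * g - 2 := by
  have hn : (n : ℤ) * (A.N - 1) = ∑ i ∈ Ico 1 A.N, (A.a i : ℤ) * (A.N - 1) := by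
    rw [← sum_mul, ← Nat.cast_sum, A.hsum]
  rw [A.hRH, hn]
  exact add_le_add_right (sum_le_sum fun i _ => A.a_mul_le_ramification i) _

theorem mem_Ico_of_a_ne_zero {i : ℕ} (h : A.a i ≠ 0) : i ∈ Ico 1 A.N :=
  not_not.1 fun hi => h (A.ha i hi)

theorem coprime_of_a_ne_zero {i : ℕ} (h : A.a i ≠ 0) : Nat.gcd i A.N = 1 :=
  not_not.1 fun hi => h (A.hcop i hi)

/-- The conditions `α j ∈ [1, N)` and `gcd (α j) N = 1` on an assignment follow from the
fibre condition, see `AssignedDatum.equivSigma`. -/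
def Assignment : Type :=
  {α : Fin n → ℕ // ∀ i, #{j | α j = i} = A.a i}

instance : Finite A.Assignment :=
  Finite.of_injective
    (fun α j => (⟨α.1 j, (mem_Ico.1 (A.mem_Ico_of_a_ne_zero
      (ne_zero_of_card_fiber_eq α.2 j))).2⟩ : Fin A.N))
    fun _ _ h => Subtype.ext (funext fun j => congrArg Fin.val (congrFun h j))

theorem card_assignment_eq_choose {k l : ℕ} (hkl : k ≠ l)
    (ha : ∀ i, i ≠ k → i ≠ l → A.a i = 0) (hcard : A.a k + A.a l = n) :
    Nat.card A.Assignment = n.choose (A.a l) := by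
  have hcard' : A.a k + A.a l = Fintype.card (Fin n) := by rwa [Fintype.card_fin]
  rw [Nat.card_congr (α := A.Assignment) (fiberCardEquivFinset hkl ha hcard'),
    Nat.card_eq_fintype_card, Fintype.card_finset_len, Fintype.card_fin]

end

theorem ext_of_eqOn_Ico {g n : ℕ} {A B : AdmissibleDatum g n} (hg' : A.g' = B.g')
    (hN : A.N = B.N) (hd : ∀ i ∈ Ico 1 A.N, A.d i = B.d i)
    (ha : ∀ i ∈ Ico 1 A.N, A.a i = B.a i) : A = B := by
  ext1
  · exact hg'
  · exact hN
  · funext i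
    by_cases hi : i ∈ Ico 1 A.N
    · exact hd i hi
    · rw [A.hd i hi, B.hd i (hN ▸ hi)]
  · funext i
    by_cases hi : i ∈ Ico 1 A.N
    · exact ha i hi
    · rw [A.ha i hi, B.ha i (hN ▸ hi)]

theorem g'_eq_zero_and_N_le_three (A : AdmissibleDatum 2 4) :
    A.g' = 0 ∧ A.N ≤ 3 := by
  have hbound := A.riemannHurwitz_lower_bound
  have hN : (2 : ℤ) ≤ A.N := by exact_mod_cast A.hN
  push_cast at hbound
  constructor
  · by_contra hg
    have : (1 : ℤ) ≤ A.g' := by exact_mod_cast Nat.one_le_iff_ne_zero.2 hg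
    nlinarith
  · have : (A.N : ℤ) ≤ 3 := by nlinarith
    exact_mod_cast this

def hyperelliptic : AdmissibleDatum 2 4 where
  g' := 0
  N := 2
  hN := le_rfl
  d i := if i = 1 then 6 else 0
  a i := if i = 1 then 4 else 0
  hd i hi := if_neg (by rintro rfl; exact hi (by decide))
  ha i hi := if_neg (by rintro rfl; exact hi (by decide))
  hRH := by decide
  hmod := by decide
  hsum := by decide
  hle i := by split_ifs <;> omega
  hcop i hi := if_neg (by rintro rfl; exact hi rfl)

def trigonal : AdmissibleDatum 2 4 where
  g' := 0
  N := 3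
  hN := by decide
  d i := if i = 1 ∨ i = 2 then 2 else 0
  a i := if i = 1 ∨ i = 2 then 2 else 0
  hd i hi := if_neg (by rintro (rfl | rfl) <;> exact hi (by decide))
  ha i hi := if_neg (by rintro (rfl | rfl) <;> exact hi (by decide))
  hRH := by decide
  hmod := by decide
  hsum := by decide
  hle _ := le_rfl
  hcop i hi := if_neg (by rintro (rfl | rfl) <;> exact hi rfl)

theorem eq_hyperelliptic_or_eq_trigonal (A : AdmissibleDatum 2 4) :
    A = hyperelliptic ∨ A = trigonal := by
  obtain ⟨hg', hN3⟩ := A.g'_eq_zero_and_N_le_three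
  have hRH := A.hRH
  have hsum := A.hsum
  rw [hg'] at hRH
  obtain hN | hN : A.N = 2 ∨ A.N = 3 := by have := A.hN; omega
  · rw [hN] at hRH hsum
    have hd : A.d 1 = 6 := by norm_num at hRH; omega
    have ha : A.a 1 = 4 := by simpa using hsum
    left
    refine ext_of_eqOn_Ico hg' hN ?_ ?_ <;> intro i hi <;>
      obtain rfl : i = 1 := by rw [mem_Ico, hN] at hi; omega
    exacts [hd, ha]
  · have hmod := A.hmod
    rw [hN, show Ico 1 3 = {1, 2} from rfl, sum_pair (by decide)] at hRH hsum hmod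
    have hd12 : A.d 1 + A.d 2 = 4 := by norm_num at hRH; omega
    have h3 : 3 ∣ 1 * A.d 1 + 2 * A.d 2 := (ZMod.natCast_eq_zero_iff _ 3).1 hmod
    have hd : A.d 1 = 2 ∧ A.d 2 = 2 := by omega
    have ha : A.a 1 = 2 ∧ A.a 2 = 2 := by have := A.hle 1; have := A.hle 2; omega
    right
    refine ext_of_eqOn_Ico hg' hN ?_ ?_ <;> intro i hi <;>
      obtain rfl | rfl : i = 1 ∨ i = 2 := by rw [mem_Ico, hN] at hi; omega
    exacts [hd.1, hd.2, ha.1, ha.2]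

noncomputable def equivBool : Bool ≃ AdmissibleDatum 2 4 :=
  Equiv.ofBijective (fun b => cond b trigonal hyperelliptic)
    ⟨by
      rintro (_ | _) (_ | _) h
      all_goals first | rfl | exact absurd (congrArg N h) (by decide),
    fun A => (eq_hyperelliptic_or_eq_trigonal A).elim
      (fun h => ⟨false, h.symm⟩) (fun h => ⟨true, h.symm⟩)⟩

end AdmissibleDatum

def AssignedDatum.equivSigma {g n : ℕ} :
    AssignedDatum g n ≃ Σ A : AdmissibleDatum g n, A.Assignment where
  toFun x := ⟨x.A, x.α, x.hfiber⟩
  invFun p :=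
    { A := p.1
      α := p.2.1
      hmem := fun j => p.1.mem_Ico_of_a_ne_zero (ne_zero_of_card_fiber_eq p.2.2 j)
      hαcop := fun j => p.1.coprime_of_a_ne_zero (ne_zero_of_card_fiber_eq p.2.2 j)
      hfiber := p.2.2 }

/-- The number of pairs `(A, α)`, where `A` is a `(2,4)`-admissible datum and `α` is an
assignment for `A`, equals seven. -/
theorem card_assignedDatum_two_four : Nat.card (AssignedDatum 2 4) = 7 := by
  open AdmissibleDatum in
  calc Nat.card (AssignedDatum 2 4)
      = Nat.card (Σ b : Bool, (equivBool b).Assignment) :=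
        Nat.card_congr (AssignedDatum.equivSigma.trans (Equiv.sigmaCongrLeft equivBool).symm)
    _ = Nat.card trigonal.Assignment + Nat.card hyperelliptic.Assignment := by
        rw [Nat.card_sigma, Fintype.sum_bool]
        rfl
    _ = Nat.choose 4 2 + Nat.choose 4 0 := by
        rw [trigonal.card_assignment_eq_choose (k := 1) (l := 2) (by decide)
            (fun _ h1 h2 => if_neg (by omega)) rfl,
          hyperelliptic.card_assignment_eq_choose (k := 1) (l := 2) (by decide)
            (fun _ h1 _ => if_neg h1) rfl]
        rfl
    _ = 7 := rfl
end

section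
/- For every natural number n ≥ 7, there are no (2,n)-admissible data. (This is the paper's assertion that the twisted part of the inertia stack of M_{2,n} is empty, and hence the correction term to the stringy Chow group of M_{2,n} vanishes, whenever n ≥ 7.) -/
namespace AdmissibleDatum

variable {g n : ℕ} (A : AdmissibleDatum g n)

lemma one_le_N_sub_one : (1 : ℤ) ≤ A.N - 1 := by
  have := A.hN
  omega

lemma marked_mul_le_ramification (i : ℕ) :
    (A.a i : ℤ) * ((A.N : ℤ) - 1) ≤
      (A.d i : ℤ) * (Nat.gcd i A.N : ℤ) * (((A.N / Nat.gcd i A.N : ℕ) : ℤ) - 1) := by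
  have hN : 0 < A.N := by linarith [A.hN]
  by_cases hcop : Nat.gcd i A.N = 1
  · rw [hcop, Nat.div_one, Nat.cast_one, mul_one]
    exact mul_le_mul_of_nonneg_right (by exact_mod_cast A.hle i)
      (by linarith [A.one_le_N_sub_one])
  · have hgcd_le : Nat.gcd i A.N ≤ A.N := Nat.le_of_dvd hN (Nat.gcd_dvd_right i A.N)
    have hquot : (1 : ℤ) ≤ ((A.N / Nat.gcd i A.N : ℕ) : ℤ) := by
      exact_mod_cast (Nat.one_le_div_iff (Nat.gcd_pos_of_pos_right i hN)).mpr hgcd_le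
    rw [A.hcop i hcop, Nat.cast_zero, zero_mul]
    exact mul_nonneg (by positivity) (by linarith)

lemma marked_mul_le : (n : ℤ) * ((A.N : ℤ) - 1) ≤ 2 * (g : ℤ) - 2 + 2 * A.N := by
  have hramification := Finset.sum_le_sum fun i (_ : i ∈ Finset.Ico 1 A.N) ↦
    A.marked_mul_le_ramification i
  rw [← Finset.sum_mul, ← Nat.cast_sum, A.hsum] at hramification
  have hg' : (0 : ℤ) ≤ A.N * (A.g' : ℤ) := by positivity
  linarith [A.hRH]

lemma le_two_mul_add_two (A : AdmissibleDatum g n) : n ≤ 2 * g + 2 := by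
  have hN := A.one_le_N_sub_one
  have hg : (2 * g : ℤ) ≤ 2 * g * (A.N - 1) := le_mul_of_one_le_right (by positivity) hN
  have : (n : ℤ) * (A.N - 1) ≤ (2 * g + 2) * (A.N - 1) := by linarith [A.marked_mul_le]
  exact_mod_cast le_of_mul_le_mul_right this (by linarith)

theorem isEmpty_of_lt (h : 2 * g + 2 < n) : IsEmpty (AdmissibleDatum g n) :=
  ⟨fun A ↦ absurd A.le_two_mul_add_two (by omega)⟩

end AdmissibleDatum

/-- For every natural number `n ≥ 7`, there are no `(2,n)`-admissible data. -/
theorem admissibleDatum_two_isEmpty (n : ℕ) (hn : 7 ≤ n) :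
    IsEmpty (AdmissibleDatum 2 n) :=
  AdmissibleDatum.isEmpty_of_lt (by omega)
end
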